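/- arXiv:2210.02056 — 4 statements merged into one kernel-verified Lean document; each statement's English description precedes it below -/
import Mathlib

section
/- Let X be a real-valued random variable with E|X| < ∞ and τ ∈ (0,1). Then the function θ ↦ E[η_τ(X−θ) − η_τ(X)], where η_τ(x) = |τ − 1{x ≤ 0}| x², has a unique minimizer ξ_τ in ℝ. -/
/-!
Let `η'(y) = 2 |τ - 1{y ≤ 0}| y` be the derivative of `η_τ` and `m = min τ (1 - τ) > 0`.
Pointwise, `η_τ` is `m`-strongly convex: `η_τ z ≥ η_τ y + η'(y) (z - y) + m (z - y)²`.
As `|η'(y)| ≤ 2 |y|`, this sandwiches `η_τ(X - θ) - η_τ(X)` between integrable functions, and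
integrating it gives `G θ ≥ G ξ + h ξ (ξ - θ) + m (ξ - θ)²` for `G θ = E[η_τ(X - θ) - η_τ(X)]`
and `h ξ = E[η'(X - ξ)]`. The function `h` is `2`-Lipschitz and strongly decreasing, so it has
a zero `ξ`, and then `G θ ≥ G ξ + m (ξ - θ)²` makes `ξ` the unique minimizer.
-/

open MeasureTheory

noncomputable section

def expectileWeight (τ y : ℝ) : ℝ := |τ - if y ≤ 0 then 1 else 0|

def expectileLoss (τ y : ℝ) : ℝ := expectileWeight τ y * y ^ 2

def expectileLossDeriv (τ y : ℝ) : ℝ := 2 * expectileWeight τ y * y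

end

section Pointwise

variable {τ : ℝ}

lemma expectileWeight_eq (hτ : τ ∈ Set.Ioo 0 1) (y : ℝ) :
    expectileWeight τ y = if y ≤ 0 then 1 - τ else τ := by
  unfold expectileWeight
  split_ifs
  · rw [abs_of_neg (by linarith [hτ.2]), neg_sub]
  · rw [sub_zero, abs_of_pos hτ.1]

lemma measurable_expectileWeight (τ : ℝ) : Measurable (expectileWeight τ) :=
  (measurable_const.sub (Measurable.ite measurableSet_Iic measurable_const
    measurable_const)).abs

lemma measurable_expectileLoss (τ : ℝ) : Measurable (expectileLoss τ) :=
  (measurable_expectileWeight τ).mul (measurable_id.pow_const 2)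

lemma measurable_expectileLossDeriv (τ : ℝ) : Measurable (expectileLossDeriv τ) :=
  (measurable_const.mul (measurable_expectileWeight τ)).mul measurable_id

lemma tangent_add_sq_le_expectileLoss (hτ : τ ∈ Set.Ioo 0 1) (y z : ℝ) :
    expectileLoss τ y + expectileLossDeriv τ y * (z - y) + min τ (1 - τ) * (z - y) ^ 2
      ≤ expectileLoss τ z := by
  have hm₁ : min τ (1 - τ) ≤ τ := min_le_left _ _
  have hm₂ : min τ (1 - τ) ≤ 1 - τ := min_le_right _ _
  unfold expectileLoss expectileLossDeriv
  simp only [expectileWeight_eq hτ]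
  split_ifs with hy hz hz
  · nlinarith [sq_nonneg (z - y)]
  · nlinarith [mul_nonneg (mul_nonneg (sub_nonneg.2 hm₂) (neg_nonneg.2 hy))
      (by linarith : (0 : ℝ) ≤ 2 * z - y)]
  · nlinarith [mul_nonneg (mul_nonneg (sub_nonneg.2 hm₁) (by linarith : (0 : ℝ) ≤ y))
      (by linarith : (0 : ℝ) ≤ y - 2 * z)]
  · nlinarith [sq_nonneg (z - y)]

lemma abs_expectileLossDeriv_le (hτ : τ ∈ Set.Ioo 0 1) (y : ℝ) :
    |expectileLossDeriv τ y| ≤ 2 * |y| := by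
  unfold expectileLossDeriv
  rw [expectileWeight_eq hτ, abs_le]
  have := le_abs_self y
  have := neg_abs_le y
  split_ifs <;> constructor <;> nlinarith [hτ.1, hτ.2]

lemma mul_sub_le_expectileLossDeriv_sub (hτ : τ ∈ Set.Ioo 0 1) {y y' : ℝ} (h : y ≤ y') :
    2 * min τ (1 - τ) * (y' - y) ≤ expectileLossDeriv τ y' - expectileLossDeriv τ y := by
  have hm₁ : min τ (1 - τ) ≤ τ := min_le_left _ _
  have hm₂ : min τ (1 - τ) ≤ 1 - τ := min_le_right _ _
  unfold expectileLossDeriv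
  simp only [expectileWeight_eq hτ]
  split_ifs <;> nlinarith

lemma expectileLossDeriv_sub_le (hτ : τ ∈ Set.Ioo 0 1) {y y' : ℝ} (h : y ≤ y') :
    expectileLossDeriv τ y' - expectileLossDeriv τ y ≤ 2 * (y' - y) := by
  unfold expectileLossDeriv
  simp only [expectileWeight_eq hτ]
  split_ifs <;> nlinarith [hτ.1, hτ.2]

end Pointwise

lemma existsUnique_forall_le_of_add_sq_le {f : ℝ → ℝ} {m ξ : ℝ} (hm : 0 < m)
    (h : ∀ θ, f ξ + m * (ξ - θ) ^ 2 ≤ f θ) : ∃! x, ∀ θ, f x ≤ f θ := by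
  refine ⟨ξ, fun θ => le_trans (by nlinarith [sq_nonneg (ξ - θ)]) (h θ), fun ξ' hξ' => ?_⟩
  have hsq : m * (ξ - ξ') ^ 2 ≤ 0 := by linarith [h ξ', hξ' ξ]
  exact (sub_eq_zero.1 <| pow_eq_zero_iff two_ne_zero |>.1 <|
    le_antisymm (nonpos_of_mul_nonpos_right hsq hm) (sq_nonneg _)).symm

lemma exists_eq_zero_of_continuous_of_add_mul_sub_le {f : ℝ → ℝ} {c : ℝ} (hc : 0 < c)
    (hf : Continuous f) (h : ∀ θ θ', θ ≤ θ' → f θ' + c * (θ' - θ) ≤ f θ) : ∃ ξ, f ξ = 0 := by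
  set b := |f 0| / c
  have hb : c * b = |f 0| := mul_div_cancel₀ _ hc.ne'
  have hb₀ : 0 ≤ b := by positivity
  have hle : f b ≤ 0 := by linarith [h 0 b hb₀, le_abs_self (f 0)]
  have hge : 0 ≤ f (-b) := by linarith [h (-b) 0 (by linarith), neg_abs_le (f 0)]
  exact mem_range_of_exists_le_of_exists_ge hf ⟨b, hle⟩ ⟨-b, hge⟩

section Integrated

variable {Ω : Type*} [MeasurableSpace Ω] {μ : Measure Ω} {X : Ω → ℝ} {τ : ℝ}

lemma integrable_expectileLossDeriv_comp {Y : Ω → ℝ} (hY : Integrable Y μ) (hτ : τ ∈ Set.Ioo 0 1) :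
    Integrable (fun ω => expectileLossDeriv τ (Y ω)) μ :=
  Integrable.mono' (hY.abs.const_mul 2)
    ((measurable_expectileLossDeriv τ).comp_aemeasurable hY.aemeasurable).aestronglyMeasurable
    (ae_of_all _ fun _ => abs_expectileLossDeriv_le hτ _)

lemma integrable_expectileLoss_sub [IsFiniteMeasure μ] (hX : Integrable X μ)
    (hτ : τ ∈ Set.Ioo 0 1) (θ : ℝ) :
    Integrable (fun ω => expectileLoss τ (X ω - θ) - expectileLoss τ (X ω)) μ := by
  have hmeas := measurable_expectileLoss τ
  refine integrable_of_le_of_le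
    ((hmeas.comp_aemeasurable (hX.aemeasurable.sub_const θ)).sub
      (hmeas.comp_aemeasurable hX.aemeasurable)).aestronglyMeasurable
    (g₁ := fun ω => -(expectileLossDeriv τ (X ω) * θ) + min τ (1 - τ) * θ ^ 2)
    (g₂ := fun ω => -(expectileLossDeriv τ (X ω - θ) * θ) - min τ (1 - τ) * θ ^ 2)
    (ae_of_all _ fun ω => ?_) (ae_of_all _ fun ω => ?_)
    (((integrable_expectileLossDeriv_comp hX hτ).mul_const θ).neg.add (integrable_const _))
    (((integrable_expectileLossDeriv_comp (hX.sub (integrable_const θ)) hτ).mul_const θ).neg.sub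
      (integrable_const _))
  · have := tangent_add_sq_le_expectileLoss hτ (X ω) (X ω - θ)
    simp only [sub_sub_cancel_left, neg_sq] at this
    linarith
  · have := tangent_add_sq_le_expectileLoss hτ (X ω - θ) (X ω)
    simp only [sub_sub_cancel] at this
    linarith

variable [IsProbabilityMeasure μ]

lemma integral_expectileLoss_sub_add_le (hX : Integrable X μ) (hτ : τ ∈ Set.Ioo 0 1) (ξ θ : ℝ) :
    ∫ ω, (expectileLoss τ (X ω - ξ) - expectileLoss τ (X ω)) ∂μ
        + (∫ ω, expectileLossDeriv τ (X ω - ξ) ∂μ) * (ξ - θ) + min τ (1 - τ) * (ξ - θ) ^ 2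
      ≤ ∫ ω, (expectileLoss τ (X ω - θ) - expectileLoss τ (X ω)) ∂μ := by
  have hderiv : Integrable (fun ω => expectileLossDeriv τ (X ω - ξ) * (ξ - θ)) μ :=
    (integrable_expectileLossDeriv_comp (hX.sub (integrable_const ξ)) hτ).mul_const _
  have hξ := integrable_expectileLoss_sub hX hτ ξ
  have hsum : Integrable (fun ω => expectileLoss τ (X ω - ξ) - expectileLoss τ (X ω)
      + expectileLossDeriv τ (X ω - ξ) * (ξ - θ)) μ := hξ.add hderiv
  calc _ = ∫ ω, (expectileLoss τ (X ω - ξ) - expectileLoss τ (X ω)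
        + expectileLossDeriv τ (X ω - ξ) * (ξ - θ) + min τ (1 - τ) * (ξ - θ) ^ 2) ∂μ := by
        rw [integral_add hsum (integrable_const _), integral_add hξ hderiv,
          integral_mul_const, integral_const, probReal_univ, one_smul]
    _ ≤ _ := integral_mono (hsum.add (integrable_const _))
        (integrable_expectileLoss_sub hX hτ θ) fun ω => by
      have := tangent_add_sq_le_expectileLoss hτ (X ω - ξ) (X ω - θ)
      rw [sub_sub_sub_cancel_left] at this
      linarith

lemma integral_expectileLossDeriv_sub_mem_Icc (hX : Integrable X μ) (hτ : τ ∈ Set.Ioo 0 1)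
    {θ θ' : ℝ} (h : θ ≤ θ') :
    ∫ ω, expectileLossDeriv τ (X ω - θ) ∂μ - ∫ ω, expectileLossDeriv τ (X ω - θ') ∂μ
      ∈ Set.Icc (2 * min τ (1 - τ) * (θ' - θ)) (2 * (θ' - θ)) := by
  have hint : ∀ θ, Integrable (fun ω => expectileLossDeriv τ (X ω - θ)) μ := fun θ =>
    integrable_expectileLossDeriv_comp (hX.sub (integrable_const θ)) hτ
  have hle : ∀ ω, X ω - θ' ≤ X ω - θ := fun ω => by linarith
  have hsub : ∀ ω, X ω - θ - (X ω - θ') = θ' - θ := fun ω => by ring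
  have hlow := integral_mono (integrable_const _) ((hint θ).sub (hint θ')) fun ω => by
    simpa only [Pi.sub_apply, hsub] using mul_sub_le_expectileLossDeriv_sub hτ (hle ω)
  have hupp := integral_mono ((hint θ).sub (hint θ')) (integrable_const _) fun ω => by
    simpa only [Pi.sub_apply, hsub] using expectileLossDeriv_sub_le hτ (hle ω)
  simp only [integral_const, probReal_univ, one_smul] at hlow hupp
  rw [← integral_sub (hint θ) (hint θ')]
  exact ⟨hlow, hupp⟩

lemma exists_integral_expectileLossDeriv_eq_zero (hX : Integrable X μ) (hτ : τ ∈ Set.Ioo 0 1) :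
    ∃ ξ, ∫ ω, expectileLossDeriv τ (X ω - ξ) ∂μ = 0 := by
  have hm : 0 < min τ (1 - τ) := lt_min hτ.1 (sub_pos.2 hτ.2)
  have hcont : Continuous fun θ => ∫ ω, expectileLossDeriv τ (X ω - θ) ∂μ := by
    refine (LipschitzWith.of_le_add_mul 2 fun θ θ' => ?_).continuous
    rw [Real.dist_eq, NNReal.coe_ofNat]
    rcases le_total θ θ' with hθ | hθ
    · have := (integral_expectileLossDeriv_sub_mem_Icc hX hτ hθ).2
      linarith [le_abs_self (θ - θ'), neg_abs_le (θ - θ')]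
    · have := (integral_expectileLossDeriv_sub_mem_Icc hX hτ hθ).1
      nlinarith [abs_nonneg (θ - θ')]
  exact exists_eq_zero_of_continuous_of_add_mul_sub_le (mul_pos two_pos hm) hcont
    fun θ θ' hθ => by linarith [(integral_expectileLossDeriv_sub_mem_Icc hX hτ hθ).1]

end Integrated

theorem expectile_exists_unique_general {Ω : Type*} [MeasurableSpace Ω] (μ : Measure Ω)
    [IsProbabilityMeasure μ] (X : Ω → ℝ) (hX : Integrable X μ)
    (τ : ℝ) (hτ : τ ∈ Set.Ioo (0 : ℝ) 1) :
    ∃! ξ : ℝ, ∀ θ : ℝ,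
      (∫ ω, (|τ - (if X ω - ξ ≤ 0 then 1 else 0)| * (X ω - ξ) ^ 2
          - |τ - (if X ω ≤ 0 then 1 else 0)| * (X ω) ^ 2) ∂μ)
        ≤ ∫ ω, (|τ - (if X ω - θ ≤ 0 then 1 else 0)| * (X ω - θ) ^ 2
          - |τ - (if X ω ≤ 0 then 1 else 0)| * (X ω) ^ 2) ∂μ := by
  obtain ⟨ξ, hξ⟩ := exists_integral_expectileLossDeriv_eq_zero hX hτ
  refine existsUnique_forall_le_of_add_sq_le (ξ := ξ)
    (f := fun θ => ∫ ω, (expectileLoss τ (X ω - θ) - expectileLoss τ (X ω)) ∂μ)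
    (lt_min hτ.1 (sub_pos.2 hτ.2)) fun θ => ?_
  simpa only [hξ, zero_mul, add_zero] using integral_expectileLoss_sub_add_le hX hτ ξ θ

/-- For an integrable real random variable `X` and `τ ∈ (0,1)`, the function
`θ ↦ E[η_τ(X−θ) − η_τ(X)]` with `η_τ(x) = |τ − 1{x ≤ 0}| x²` has a unique minimizer. -/
theorem expectile_exists_unique {Ω : Type*} [MeasurableSpace Ω] (μ : Measure Ω)
    [IsProbabilityMeasure μ] (X : Ω → ℝ) (hXmeas : Measurable X) (hX : Integrable X μ)
    (τ : ℝ) (hτ : τ ∈ Set.Ioo (0 : ℝ) 1) :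
    ∃! ξ : ℝ, ∀ θ : ℝ,
      (∫ ω, (|τ - (if X ω - ξ ≤ 0 then 1 else 0)| * (X ω - ξ) ^ 2
          - |τ - (if X ω ≤ 0 then 1 else 0)| * (X ω) ^ 2) ∂μ)
        ≤ ∫ ω, (|τ - (if X ω - θ ≤ 0 then 1 else 0)| * (X ω - θ) ^ 2
          - |τ - (if X ω ≤ 0 then 1 else 0)| * (X ω) ^ 2) ∂μ :=
  expectile_exists_unique_general μ X hX τ hτ
end

section
/- Let X be an integrable random variable with E[|X−x|] > 0 for all x. Then for each τ ∈ (0,1), the τ-th expectile ξ_τ of X is the τ-th quantile of the distribution function E(x) = 1 − Ē(x), where Ē(x) = E[(X−x) 1{X > x}] / E|X − x|. That is, E(ξ_τ) = τ whenever E is continuous, and more generally ξ_τ solves Ē(θ) = 1 − τ. -/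
open MeasureTheory

/-!
Splitting `|X - ξ|` into its positive and negative parts gives
`E|X - ξ| = A + B` with `A = E[(X - ξ) 1{X > ξ}]` and `B = E[(ξ - X) 1{X ≤ ξ}]`.
The expectile equation `τ A = (1 - τ) B` rearranges to `A = (1 - τ) (A + B)`.
-/

section LinearOrderedAddCommGroup

variable {α : Type*} [AddCommGroup α] [LinearOrder α] [IsOrderedAddMonoid α]

lemma ite_lt_sub_eq_max (a x : α) : (if x < a then a - x else 0) = max (a - x) 0 := by
  split_ifs with h
  · exact (max_eq_left (sub_nonneg.2 h.le)).symm
  · exact (max_eq_right (sub_nonpos.2 (not_lt.1 h))).symm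

lemma ite_le_sub_eq_max (a x : α) : (if a ≤ x then x - a else 0) = max (-(a - x)) 0 := by
  rw [neg_sub]
  split_ifs with h
  · exact (max_eq_left (sub_nonneg.2 h)).symm
  · exact (max_eq_right (sub_nonpos.2 (not_le.1 h).le)).symm

end LinearOrderedAddCommGroup

lemma integral_abs_eq_integral_max_add_integral_max {Ω : Type*} [MeasurableSpace Ω]
    {μ : Measure Ω} {f : Ω → ℝ} (hf : Integrable f μ) :
    ∫ ω, |f ω| ∂μ = ∫ ω, max (f ω) 0 ∂μ + ∫ ω, max (-f ω) 0 ∂μ := by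
  have hneg : Integrable (fun ω => max (-f ω) 0) μ := hf.neg.pos_part
  rw [← integral_add hf.pos_part hneg]
  simp only [max_zero_add_max_neg_zero_eq_abs_self]

lemma div_add_eq_one_sub_of_mul_eq_mul {K : Type*} [Field K] {τ A B : K}
    (h : τ * A = (1 - τ) * B) (hAB : A + B ≠ 0) : A / (A + B) = 1 - τ := by
  rw [div_eq_iff hAB]
  linear_combination h

theorem expectile_is_quantile_of_E_general {Ω : Type*} [MeasurableSpace Ω] (μ : Measure Ω)
    [IsProbabilityMeasure μ] (X : Ω → ℝ) (hX : Integrable X μ)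
    (hpos : ∀ x : ℝ, 0 < ∫ ω, |X ω - x| ∂μ)
    (τ : ℝ) (ξ : ℝ)
    (hξ : τ * ∫ ω, (if ξ < X ω then X ω - ξ else 0) ∂μ
        = (1 - τ) * ∫ ω, (if X ω ≤ ξ then ξ - X ω else 0) ∂μ) :
    (∫ ω, (if ξ < X ω then X ω - ξ else 0) ∂μ) / (∫ ω, |X ω - ξ| ∂μ) = 1 - τ := by
  have hsub : Integrable (fun ω => X ω - ξ) μ := hX.sub (integrable_const ξ)
  have hAB := hpos ξ
  rw [integral_abs_eq_integral_max_add_integral_max hsub] at hAB ⊢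
  simp only [ite_lt_sub_eq_max, ite_le_sub_eq_max] at hξ ⊢
  exact div_add_eq_one_sub_of_mul_eq_mul hξ hAB.ne'

/-- Jones's 1994 observation: if `ξ` is the τ-th expectile of `X`, i.e. it
solves `τ E[(X−ξ)1{X>ξ}] = (1−τ) E[(ξ−X)1{X≤ξ}]`, and `E|X−x| > 0` for all `x`, then
`Ē(ξ) = 1 − τ` where `Ē(x) = E[(X−x)1{X>x}]/E|X−x|`; that is, `ξ` is the τ-th quantile of
the distribution function `E = 1 − Ē`. -/
theorem expectile_is_quantile_of_E {Ω : Type*} [MeasurableSpace Ω] (μ : Measure Ω)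
    [IsProbabilityMeasure μ] (X : Ω → ℝ) (hXmeas : Measurable X) (hX : Integrable X μ)
    (hpos : ∀ x : ℝ, 0 < ∫ ω, |X ω - x| ∂μ)
    (τ : ℝ) (hτ : τ ∈ Set.Ioo (0 : ℝ) 1) (ξ : ℝ)
    (hξ : τ * ∫ ω, (if ξ < X ω then X ω - ξ else 0) ∂μ
        = (1 - τ) * ∫ ω, (if X ω ≤ ξ then ξ - X ω else 0) ∂μ) :
    (∫ ω, (if ξ < X ω then X ω - ξ else 0) ∂μ) / (∫ ω, |X ω - ξ| ∂μ) = 1 - τ :=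
  expectile_is_quantile_of_E_general μ X hX hpos τ ξ hξ
end

section
/- The map τ ↦ ξ_τ is strictly increasing on (0,1) for any nondegenerate integrable random variable X whose support has more than one point. -/
open MeasureTheory Filter Topology

/-- For a nondegenerate integrable random variable `X` (support with more
than one point), the map `τ ↦ ξ_τ` is strictly increasing on `(0,1)`, where `ξ_τ` is the
τ-th expectile, the unique solution of `τ E[(X−θ)1{X>θ}] = (1−τ) E[(θ−X)1{X≤θ}]`. -/
theorem expectile_strictMonoOn {Ω : Type*} [MeasurableSpace Ω] (μ : Measure Ω)
    [IsProbabilityMeasure μ] (X : Ω → ℝ) (hXmeas : Measurable X) (hX : Integrable X μ)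
    (hnd : ¬ ∃ c : ℝ, ∀ᵐ ω ∂μ, X ω = c)
    (ξ : ℝ → ℝ)
    (hξ : ∀ τ ∈ Set.Ioo (0 : ℝ) 1,
      τ * ∫ ω, (if ξ τ < X ω then X ω - ξ τ else 0) ∂μ
        = (1 - τ) * ∫ ω, (if X ω ≤ ξ τ then ξ τ - X ω else 0) ∂μ) :
    StrictMonoOn ξ (Set.Ioo (0 : ℝ) 1) := by
  -- rewrite the indicators as positive parts
  have hifG : ∀ θ : ℝ, (fun ω => if θ < X ω then X ω - θ else 0)
      = fun ω => max (X ω - θ) 0 := by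
    intro θ; funext ω; split_ifs with h
    · exact (max_eq_left (by linarith)).symm
    · exact (max_eq_right (by push_neg at h; linarith)).symm
  have hifL : ∀ θ : ℝ, (fun ω => if X ω ≤ θ then θ - X ω else 0)
      = fun ω => max (θ - X ω) 0 := by
    intro θ; funext ω; split_ifs with h
    · exact (max_eq_left (by linarith)).symm
    · exact (max_eq_right (by push_neg at h; linarith)).symm
  set G : ℝ → ℝ := fun θ => ∫ ω, max (X ω - θ) 0 ∂μ with hGdef
  set L : ℝ → ℝ := fun θ => ∫ ω, max (θ - X ω) 0 ∂μ with hLdef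
  have hintG : ∀ θ : ℝ, Integrable (fun ω => max (X ω - θ) 0) μ := fun θ =>
    (hX.sub (integrable_const θ)).pos_part
  have hintL : ∀ θ : ℝ, Integrable (fun ω => max (θ - X ω) 0) μ := fun θ =>
    ((integrable_const θ).sub hX).pos_part
  have hGanti : ∀ a b : ℝ, a ≤ b → G b ≤ G a := by
    intro a b hab
    exact integral_mono (hintG b) (hintG a) (fun ω => max_le_max (by linarith) le_rfl)
  have hLmono : ∀ a b : ℝ, a ≤ b → L a ≤ L b := by
    intro a b hab
    exact integral_mono (hintL a) (hintL b) (fun ω => max_le_max (by linarith) le_rfl)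
  have hGL : ∀ θ : ℝ, G θ + L θ = ∫ ω, |X ω - θ| ∂μ := by
    intro θ
    rw [hGdef, hLdef]
    rw [← integral_add (hintG θ) (hintL θ)]
    congr 1; funext ω
    rcases le_total (X ω) θ with h | h
    · rw [max_eq_right (by linarith), max_eq_left (by linarith), abs_of_nonpos (by linarith)]
      ring
    · rw [max_eq_left (by linarith), max_eq_right (by linarith), abs_of_nonneg (by linarith)]
      ring
  -- main argument
  intro τ₁ h₁ τ₂ h₂ hlt
  have e1 := hξ τ₁ h₁
  have e2 := hξ τ₂ h₂
  rw [hifG (ξ τ₁), hifL (ξ τ₁)] at e1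
  rw [hifG (ξ τ₂), hifL (ξ τ₂)] at e2
  change τ₁ * G (ξ τ₁) = (1 - τ₁) * L (ξ τ₁) at e1
  change τ₂ * G (ξ τ₂) = (1 - τ₂) * L (ξ τ₂) at e2
  -- G + L > 0 at ξ τ₁ by nondegeneracy
  have habsint : Integrable (fun ω => |X ω - ξ τ₁|) μ := (hX.sub (integrable_const _)).abs
  have hpos : 0 < G (ξ τ₁) + L (ξ τ₁) := by
    rw [hGL]
    rcases (integral_nonneg (μ := μ) (f := fun ω => |X ω - ξ τ₁|) (fun ω => abs_nonneg (X ω - ξ τ₁))).lt_or_eq with h | h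
    · exact h
    · exfalso
      apply hnd
      refine ⟨ξ τ₁, ?_⟩
      have := (integral_eq_zero_iff_of_nonneg (fun ω => abs_nonneg (X ω - ξ τ₁)) habsint).1
        h.symm
      filter_upwards [this] with ω hω
      have : |X ω - ξ τ₁| = 0 := hω
      have := abs_eq_zero.1 this
      linarith
  have key : 0 < τ₂ * G (ξ τ₁) - (1 - τ₂) * L (ξ τ₁) := by
    have : τ₂ * G (ξ τ₁) - (1 - τ₂) * L (ξ τ₁) = (τ₂ - τ₁) * (G (ξ τ₁) + L (ξ τ₁)) := by
      linear_combination e1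
    rw [this]
    exact mul_pos (by linarith) hpos
  by_contra hcon
  push_neg at hcon
  have hG12 : G (ξ τ₁) ≤ G (ξ τ₂) := hGanti _ _ hcon
  have hL12 : L (ξ τ₂) ≤ L (ξ τ₁) := hLmono _ _ hcon
  have hτ₂ : 0 < τ₂ := h₂.1
  have hτ₂' : τ₂ < 1 := h₂.2
  nlinarith [mul_le_mul_of_nonneg_left hG12 hτ₂.le,
    mul_le_mul_of_nonneg_left hL12 (by linarith : (0:ℝ) ≤ 1 - τ₂)]
end

section
/- Let X be heavy-tailed with tail quantile function U satisfying U(sz)/U(s) → z^γ for all z > 0, where 0 < γ < 1, and suppose E|min(X,0)| < ∞ and U(s) → ∞. Then F̄(ξ_τ)/(1−τ) → γ⁻¹ − 1 as τ ↑ 1. -/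
open MeasureTheory Filter Topology Set ProbabilityTheory

set_option linter.unusedSectionVars false
set_option linter.unusedVariables false
set_option maxHeartbeats 1000000

namespace BelliniAux

variable (ν : Measure ℝ) [IsProbabilityMeasure ν]

noncomputable def Fb (x : ℝ) : ℝ := (ν (Ioi x)).toReal

lemma cdf_apply (x : ℝ) : cdf ν x = (ν (Iic x)).toReal := cdf_eq_real ν x

lemma Fb_eq (x : ℝ) : Fb ν x = 1 - cdf ν x := by
  rw [Fb, cdf_apply, ← compl_Iic, measure_compl measurableSet_Iic (measure_ne_top ν _),
    measure_univ]
  rw [ENNReal.toReal_sub_of_le (prob_le_one) (by simp)]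
  simp

lemma Fb_nonneg (x : ℝ) : 0 ≤ Fb ν x := ENNReal.toReal_nonneg

lemma Fb_anti : Antitone (Fb ν) := fun a b hab => by
  have : Ioi b ⊆ Ioi a := Ioi_subset_Ioi hab
  exact ENNReal.toReal_mono (measure_ne_top ν _) (measure_mono this)

lemma Fb_tendsto_zero : Tendsto (Fb ν) atTop (𝓝 0) := by
  have h := tendsto_cdf_atTop ν
  have h2 : Tendsto (fun x => 1 - cdf ν x) atTop (𝓝 (1 - 1)) := (tendsto_const_nhds).sub h
  have : (Fb ν) = fun x => 1 - cdf ν x := funext (Fb_eq ν)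
  rw [this]
  simpa using h2

noncomputable def Q (τ : ℝ) : ℝ := sInf {x : ℝ | τ ≤ cdf ν x}

lemma Q_set_nonempty {τ : ℝ} (hτ : τ < 1) : {x : ℝ | τ ≤ cdf ν x}.Nonempty := by
  have := tendsto_cdf_atTop ν
  rcases (this.eventually (eventually_ge_nhds (show τ < 1 from hτ))).exists with ⟨x, hx⟩
  exact ⟨x, hx⟩

lemma Q_set_bddBelow {τ : ℝ} (hτ : 0 < τ) : BddBelow {x : ℝ | τ ≤ cdf ν x} := by
  have := tendsto_cdf_atBot ν
  rcases (this.eventually (eventually_lt_nhds (show (0:ℝ) < τ from hτ))).exists with ⟨z, hz⟩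
  refine ⟨z, fun y hy => ?_⟩
  by_contra h
  push_neg at h
  have := (monotone_cdf ν) h.le
  have h3 : cdf ν y < τ := lt_of_le_of_lt this hz
  exact absurd hy (not_le.mpr h3)

lemma Q_le {τ x : ℝ} (hτ : 0 < τ) (h : τ ≤ cdf ν x) : Q ν τ ≤ x :=
  csInf_le (Q_set_bddBelow ν hτ) h

lemma le_Q {τ x : ℝ} (hτ : τ < 1) (h : cdf ν x < τ) : x ≤ Q ν τ := by
  refine le_csInf (Q_set_nonempty ν hτ) (fun y hy => ?_)
  by_contra hc
  push_neg at hc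
  exact absurd (le_trans hy ((monotone_cdf ν) hc.le)) (not_le.mpr h)

lemma cdf_Q {τ : ℝ} (hτ0 : 0 < τ) (hτ1 : τ < 1) : τ ≤ cdf ν (Q ν τ) := by
  have hne := Q_set_nonempty ν hτ1
  have key : ∀ z, Q ν τ < z → τ ≤ cdf ν z := by
    intro z hz
    rcases exists_lt_of_csInf_lt hne hz with ⟨y, hy, hyz⟩
    exact le_trans hy ((monotone_cdf ν) hyz.le)
  have hrc : ContinuousWithinAt (cdf ν) (Ioi (Q ν τ)) (Q ν τ) :=
    ((cdf ν).right_continuous _).mono Ioi_subset_Ici_self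
  have hne' : (𝓝[>] (Q ν τ)).NeBot := nhdsGT_neBot _
  have hrc' : Tendsto (cdf ν) (𝓝[>] (Q ν τ)) (𝓝 (cdf ν (Q ν τ))) := hrc
  exact ge_of_tendsto hrc' (eventually_nhdsWithin_of_forall (fun z hz => key z hz))

lemma Q_mono : ∀ {τ τ' : ℝ}, 0 < τ → τ ≤ τ' → τ' < 1 → Q ν τ ≤ Q ν τ' := by
  intro τ τ' hτ hττ' hτ'
  refine le_csInf (Q_set_nonempty ν hτ') (fun y hy => ?_)
  exact Q_le ν hτ (le_trans hττ' hy)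

section Uprops

variable (U : ℝ → ℝ) (hUQ : ∀ s : ℝ, U s = Q ν (1 - 1/s))

include hUQ

lemma tau_mem {s : ℝ} (hs : 2 ≤ s) : 0 < 1 - 1/s ∧ 1 - 1/s < 1 := by
  have h0 : (0:ℝ) < s := by linarith
  constructor
  · have : 1/s ≤ 1/2 := by
      rw [div_le_div_iff₀ h0 (by norm_num)]; linarith
    linarith
  · have : 0 < 1/s := by positivity
    linarith

lemma U_mono {s s' : ℝ} (hs : 2 ≤ s) (hss' : s ≤ s') : U s ≤ U s' := by
  rw [hUQ, hUQ]
  obtain ⟨h1, _⟩ := tau_mem ν U hUQ hs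
  obtain ⟨_, h2⟩ := tau_mem ν U hUQ (hs.trans hss')
  refine Q_mono ν h1 ?_ h2
  have h0 : (0:ℝ) < s := by linarith
  have h0' : (0:ℝ) < s' := by linarith
  have : 1/s' ≤ 1/s := one_div_le_one_div_of_le h0 hss'
  linarith

lemma Fb_pos (hUtop : Tendsto U atTop atTop) (x : ℝ) : 0 < Fb ν x := by
  rcases lt_or_eq_of_le (Fb_nonneg ν x) with h | h
  · exact h
  exfalso
  have hcdf : cdf ν x = 1 := by have := Fb_eq ν x; rw [← h] at this; linarith
  have hb : ∀ s : ℝ, 2 ≤ s → U s ≤ x := by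
    intro s hs
    rw [hUQ]
    obtain ⟨h1, h2⟩ := tau_mem ν U hUQ hs
    exact Q_le ν h1 (by rw [hcdf]; linarith)
  rcases ((hUtop.eventually_ge_atTop (x+1)).and (eventually_ge_atTop (2:ℝ))).exists with
    ⟨s, hs1, hs2⟩
  have := hb s hs2
  linarith

/-- lower sandwich: `U(1/F̄(x)) ≤ x` when `cdf x > 0`. -/
lemma U_inv_Fb_le (hUtop : Tendsto U atTop atTop) {x : ℝ} (hx : 0 < cdf ν x) :
    U ((Fb ν x)⁻¹) ≤ x := by
  rw [hUQ]
  have hFb := Fb_pos ν U hUQ hUtop x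
  have : 1 - 1/(Fb ν x)⁻¹ = cdf ν x := by
    rw [one_div, inv_inv]
    have := Fb_eq ν x; linarith
  rw [this]
  exact Q_le ν hx le_rfl

/-- upper sandwich: `x ≤ U(s)` when `s > 1/F̄(x)`. -/
lemma le_U_of_gt (hUtop : Tendsto U atTop atTop) {x s : ℝ} (hs : (Fb ν x)⁻¹ < s) :
    x ≤ U s := by
  have hFb := Fb_pos ν U hUQ hUtop x
  have hs0 : 0 < s := lt_trans (inv_pos.mpr hFb) hs
  rw [hUQ]
  refine le_Q ν ?_ ?_
  · have : 0 < 1/s := by positivity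
    linarith
  · have h1 : 1/s < Fb ν x := by
      rw [div_lt_iff₀ hs0]
      rw [inv_lt_iff_one_lt_mul₀ hFb] at hs
      linarith [mul_comm (Fb ν x) s ▸ hs]
    have := Fb_eq ν x
    linarith

end Uprops


lemma h0cdf : ∀ᶠ x in atTop, 0 < cdf ν x :=
  (tendsto_cdf_atTop ν).eventually (eventually_gt_nhds one_pos)

section RV
variable (U : ℝ → ℝ) (hUQ : ∀ s : ℝ, U s = Q ν (1 - 1/s)) (hUtop : Tendsto U atTop atTop)
  (γ : ℝ) (hγ : γ ∈ Set.Ioo (0:ℝ) 1)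
  (hRV : ∀ z : ℝ, 0 < z → Tendsto (fun s => U (s * z) / U s) atTop (𝓝 (z ^ γ)))

include hUtop hRV in
lemma U_ratio {a b : ℝ} (ha : 0 < a) (hb : 0 < b) :
    Tendsto (fun s => U (s * a) / U (s * b)) atTop (𝓝 (a ^ γ / b ^ γ)) := by
  have hb' : (b:ℝ) ^ γ ≠ 0 := (Real.rpow_pos_of_pos hb γ).ne'
  have h := (hRV a ha).div (hRV b hb) hb'
  have hUb : Tendsto (fun s : ℝ => s * b) atTop atTop :=
    Tendsto.atTop_mul_const hb tendsto_id
  have e1 : ∀ᶠ s in atTop, (1:ℝ) ≤ U s := hUtop.eventually_ge_atTop 1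
  have e2 : ∀ᶠ s in atTop, (1:ℝ) ≤ U (s * b) := hUb.eventually (hUtop.eventually_ge_atTop 1)
  refine Tendsto.congr' ?_ h
  filter_upwards [e1, e2] with s h1 h2
  have h1' : U s ≠ 0 := by linarith
  have h2' : U (s * b) ≠ 0 := by linarith
  rw [Pi.div_apply]
  field_simp

include hUQ hUtop in
lemma V_tendsto : Tendsto (fun t => (Fb ν t)⁻¹) atTop atTop := by
  have h : Tendsto (Fb ν) atTop (𝓝[>] 0) :=
    tendsto_nhdsWithin_of_tendsto_nhds_of_eventually_within _ (Fb_tendsto_zero ν)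
      (Eventually.of_forall fun t => Fb_pos ν U hUQ hUtop t)
  exact h.inv_tendsto_nhdsGT_zero

include hUQ hUtop hγ hRV in
lemma Fb_RV (z : ℝ) (hz : 0 < z) :
    Tendsto (fun t => Fb ν (t * z) / Fb ν t) atTop (𝓝 (z ^ (-γ⁻¹))) := by
  obtain ⟨hγ0, hγ1⟩ := hγ
  set V : ℝ → ℝ := fun x => (Fb ν x)⁻¹ with hVdef
  have hVpos : ∀ x, 0 < V x := fun x => inv_pos.mpr (Fb_pos ν U hUQ hUtop x)
  have hVtop : Tendsto V atTop atTop := V_tendsto ν U hUQ hUtop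
  have hVztop : Tendsto (fun t => V (t * z)) atTop atTop :=
    hVtop.comp (Tendsto.atTop_mul_const hz tendsto_id)
  have hzpow : (0:ℝ) < z ^ γ⁻¹ := Real.rpow_pos_of_pos hz _
  have hcdfz : ∀ᶠ t in atTop, 0 < cdf ν (t * z) :=
    (Tendsto.atTop_mul_const hz (tendsto_id (α := ℝ))).eventually (h0cdf ν)
  suffices hVr : Tendsto (fun t => V (t * z) / V t) atTop (𝓝 (z ^ γ⁻¹)) by
    have h := hVr.inv₀ hzpow.ne'
    rw [Real.rpow_neg hz.le]
    refine Tendsto.congr (fun t => ?_) h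
    have h1 := (Fb_pos ν U hUQ hUtop (t * z)).ne'
    have h2 := (Fb_pos ν U hUQ hUtop t).ne'
    simp only [hVdef]
    rw [inv_div]
    field_simp
  rw [tendsto_order]
  constructor
  · -- lower bound
    intro c hc
    rcases le_or_gt c 0 with hc0 | hc0
    · exact Eventually.of_forall fun t =>
        lt_of_le_of_lt hc0 (div_pos (hVpos _) (hVpos _))
    · have hcz : c ^ γ < z := by
        have h1 : c ^ γ < (z ^ γ⁻¹) ^ γ :=
          Real.rpow_lt_rpow hc0.le hc hγ0
        rwa [← Real.rpow_mul hz.le, inv_mul_cancel₀ hγ0.ne', Real.rpow_one] at h1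
      have hcγpos : (0:ℝ) < c ^ γ := Real.rpow_pos_of_pos hc0 _
      set δ := z / c ^ γ with hδdef
      have hδ : 1 < δ := (one_lt_div hcγpos).mpr hcz
      set ε := min 1 ((δ - 1)/2) with hεdef
      have hε : 0 < ε := lt_min one_pos (by linarith)
      have hε1 : ε ≤ 1 := min_le_left _ _
      have hε2 : ε ≤ (δ - 1)/2 := min_le_right _ _
      have h1ε : (1:ℝ) ≤ 1 + ε := by linarith
      have hpowε : (1 + ε) ^ γ ≤ 1 + ε := by
        have := Real.rpow_le_rpow_of_exponent_le h1ε hγ1.le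
        rwa [Real.rpow_one] at this
      have hL : (c * (1 + ε)) ^ γ < z := by
        rw [Real.mul_rpow hc0.le (by linarith)]
        have h2 : c ^ γ * (1 + ε) ^ γ ≤ c ^ γ * (1 + ε) :=
          mul_le_mul_of_nonneg_left hpowε hcγpos.le
        have h3 : c ^ γ * (1 + ε) < c ^ γ * δ := by
          apply mul_lt_mul_of_pos_left _ hcγpos; linarith
        have h4 : c ^ γ * δ = z := by
          rw [hδdef]; field_simp
        linarith
      have hcε : 0 < c * (1 + ε) := by positivity
      have hev : ∀ᶠ s in atTop, U (s * (c * (1 + ε))) / U s < z :=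
        (hRV _ hcε).eventually (eventually_lt_nhds hL)
      have hUpos : ∀ᶠ s in atTop, (0:ℝ) < U s :=
        hUtop.eventually_gt_atTop 0
      obtain ⟨S, hS⟩ := eventually_atTop.mp (hev.and hUpos)
      filter_upwards [hVtop.eventually_ge_atTop S, h0cdf ν] with t h1 h2
      rw [lt_div_iff₀ (hVpos t)]
      by_contra hcon
      push_neg at hcon
      set s := V t with hsdef
      obtain ⟨hratio, hUs⟩ := hS s h1
      have n1 : U s ≤ t := U_inv_Fb_le ν U hUQ hUtop h2
      have n2 : t * z ≤ U (s * (c * (1 + ε))) := by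
        refine le_U_of_gt ν U hUQ hUtop ?_
        calc (Fb ν (t * z))⁻¹ = V (t * z) := rfl
          _ ≤ c * s := hcon
          _ < s * (c * (1 + ε)) := by
            have hs0 : 0 < s := hVpos t
            nlinarith [mul_pos (mul_pos hc0 hs0) hε]
      have : z ≤ U (s * (c * (1 + ε))) / U s := by
        rw [le_div_iff₀ hUs]
        nlinarith [mul_le_mul_of_nonneg_left n1 hz.le, n2]
      linarith
  · -- upper bound
    intro c hc
    have hc0 : 0 < c := lt_trans hzpow hc
    have hcz : z < c ^ γ := by
      have h1 : (z ^ γ⁻¹) ^ γ < c ^ γ := Real.rpow_lt_rpow hzpow.le hc hγ0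
      rwa [← Real.rpow_mul hz.le, inv_mul_cancel₀ hγ0.ne', Real.rpow_one] at h1
    have hcγpos : (0:ℝ) < c ^ γ := Real.rpow_pos_of_pos hc0 _
    set δ := c ^ γ / z with hδdef
    have hδ : 1 < δ := (one_lt_div hz).mpr hcz
    set ε := min 1 ((δ - 1)/2) with hεdef
    have hε : 0 < ε := lt_min one_pos (by linarith)
    have hε2 : ε ≤ (δ - 1)/2 := min_le_right _ _
    have h1ε : (1:ℝ) ≤ 1 + ε := by linarith
    have hpowε : (1 + ε) ^ γ ≤ 1 + ε := by
      have := Real.rpow_le_rpow_of_exponent_le h1ε hγ1.le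
      rwa [Real.rpow_one] at this
    have hεpos : (0:ℝ) < 1 + ε := by linarith
    have hL : z < c ^ γ / (1 + ε) ^ γ := by
      rw [lt_div_iff₀ (Real.rpow_pos_of_pos hεpos γ)]
      have h3 : z * (1 + ε) ^ γ ≤ z * (1 + ε) := mul_le_mul_of_nonneg_left hpowε hz.le
      have h4 : z * (1 + ε) < z * δ := by apply mul_lt_mul_of_pos_left _ hz; linarith
      have h5 : z * δ = c ^ γ := by rw [hδdef]; field_simp
      linarith
    have hRt := U_ratio U hUtop γ hRV hc0 hεpos
    have hev : ∀ᶠ s in atTop, z < U (s * c) / U (s * (1 + ε)) :=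
      hRt.eventually (eventually_gt_nhds hL)
    have hUb : Tendsto (fun s : ℝ => s * (1 + ε)) atTop atTop :=
      Tendsto.atTop_mul_const hεpos tendsto_id
    have hUpos : ∀ᶠ s in atTop, (0:ℝ) < U (s * (1 + ε)) :=
      hUb.eventually (hUtop.eventually_gt_atTop 0)
    obtain ⟨S, hS⟩ := eventually_atTop.mp (hev.and hUpos)
    filter_upwards [hVtop.eventually_ge_atTop S, hVtop.eventually_ge_atTop (2 / c), hcdfz]
      with t h1 h2 h3
    rw [div_lt_iff₀ (hVpos t)]
    by_contra hcon
    push_neg at hcon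
    set s := V t with hsdef
    obtain ⟨hratio, hUp⟩ := hS s h1
    have hsc2 : 2 ≤ s * c := by
      rw [div_le_iff₀ hc0] at h2; linarith [h2]
    have m1 : U (s * c) ≤ U (V (t * z)) := by
      refine U_mono ν U hUQ hsc2 ?_
      calc s * c = c * s := mul_comm _ _
        _ ≤ V (t * z) := hcon
    have m2 : U (V (t * z)) ≤ t * z := U_inv_Fb_le ν U hUQ hUtop h3
    have m3 : t ≤ U (s * (1 + ε)) := by
      refine le_U_of_gt ν U hUQ hUtop ?_
      calc (Fb ν t)⁻¹ = s := rfl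
        _ < s * (1 + ε) := by nlinarith [hVpos t]
    have : U (s * c) / U (s * (1 + ε)) ≤ z := by
      rw [div_le_iff₀ hUp]
      nlinarith
    linarith
end RV

section Karamata
variable (γ : ℝ) (hγ : γ ∈ Set.Ioo (0:ℝ) 1) (hFbpos : ∀ x, 0 < Fb ν x)
  (hFbRV : ∀ z : ℝ, 0 < z → Tendsto (fun t => Fb ν (t * z) / Fb ν t) atTop (𝓝 (z ^ (-γ⁻¹))))

include hγ hFbpos hFbRV in
lemma Fb_potter {β : ℝ} (hβ1 : 1 < β) (hβγ : β < γ⁻¹) :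
    ∃ t₀ : ℝ, 1 ≤ t₀ ∧ ∀ t ≥ t₀, ∀ w ≥ (1:ℝ),
      Fb ν (t * w) ≤ 2 ^ β * w ^ (-β) * Fb ν t := by
  have h2lim := hFbRV 2 two_pos
  have hlt : (2:ℝ) ^ (-γ⁻¹) < 2 ^ (-β) :=
    Real.rpow_lt_rpow_of_exponent_lt one_lt_two (by linarith)
  have hev : ∀ᶠ t in atTop, Fb ν (t * 2) / Fb ν t < 2 ^ (-β) :=
    h2lim.eventually (eventually_lt_nhds hlt)
  obtain ⟨t₁, ht₁⟩ := eventually_atTop.mp hev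
  refine ⟨max t₁ 1, le_max_right _ _, ?_⟩
  intro t ht w hw
  have ht1 : (1:ℝ) ≤ t := le_trans (le_max_right _ _) ht
  have ht0 : (0:ℝ) < t := by linarith
  have hstep : ∀ u : ℝ, t ≤ u → Fb ν (u * 2) ≤ 2 ^ (-β) * Fb ν u := by
    intro u hu
    have hu1 : t₁ ≤ u := le_trans (le_trans (le_max_left _ _) ht) hu
    have := ht₁ u hu1
    have hFb := hFbpos u
    rw [div_lt_iff₀ hFb] at this
    linarith
  -- doubling by induction
  have hdbl : ∀ k : ℕ, Fb ν (t * 2 ^ k) ≤ ((2:ℝ) ^ (-β)) ^ k * Fb ν t := by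
    intro k
    induction k with
    | zero => simp
    | succ n ih =>
      have h2n : (1:ℝ) ≤ 2 ^ n := one_le_pow₀ (by norm_num)
      have htn : t ≤ t * 2 ^ n := le_mul_of_one_le_right ht0.le h2n
      have := hstep (t * 2 ^ n) htn
      have heq : t * 2 ^ (n + 1) = t * 2 ^ n * 2 := by ring
      rw [heq]
      calc Fb ν (t * 2 ^ n * 2) ≤ 2 ^ (-β) * Fb ν (t * 2 ^ n) := this
        _ ≤ 2 ^ (-β) * (((2:ℝ) ^ (-β)) ^ n * Fb ν t) := by
            apply mul_le_mul_of_nonneg_left ih (Real.rpow_nonneg (by norm_num) _)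
        _ = ((2:ℝ) ^ (-β)) ^ (n + 1) * Fb ν t := by ring
  -- choose k = floor of logb 2 w
  have hw0 : (0:ℝ) < w := by linarith
  set k := ⌊Real.logb 2 w⌋₊ with hk
  have hlogb : 0 ≤ Real.logb 2 w := Real.logb_nonneg one_lt_two hw
  have h2k_le : (2:ℝ) ^ k ≤ w := by
    have h1 : (k:ℝ) ≤ Real.logb 2 w := Nat.floor_le hlogb
    have h2 : (2:ℝ) ^ (k:ℝ) ≤ 2 ^ Real.logb 2 w :=
      Real.rpow_le_rpow_of_exponent_le one_le_two h1
    rwa [Real.rpow_natCast, Real.rpow_logb two_pos (by norm_num) hw0] at h2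
  have hlt2k : w < 2 ^ (k + 1) := by
    have h1 : Real.logb 2 w < (k:ℝ) + 1 := Nat.lt_floor_add_one _
    have h2 : (2:ℝ) ^ Real.logb 2 w < 2 ^ ((k:ℝ) + 1) :=
      Real.rpow_lt_rpow_of_exponent_lt one_lt_two h1
    rw [Real.rpow_logb two_pos (by norm_num) hw0] at h2
    calc w < 2 ^ ((k:ℝ) + 1) := h2
      _ = 2 ^ (k + 1) := by
          rw [← Real.rpow_natCast 2 (k+1)]
          norm_num
  have hmono : Fb ν (t * w) ≤ Fb ν (t * 2 ^ k) := by
    apply Fb_anti ν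
    exact mul_le_mul_of_nonneg_left h2k_le ht0.le
  have hpow_eq : ((2:ℝ) ^ (-β)) ^ k = ((2:ℝ) ^ k) ^ (-β) := by
    rw [← Real.rpow_natCast ((2:ℝ) ^ (-β)) k, ← Real.rpow_natCast (2:ℝ) k,
      ← Real.rpow_mul (by norm_num), ← Real.rpow_mul (by norm_num)]
    ring_nf
  have hpow_le : ((2:ℝ) ^ k) ^ (-β) ≤ (w / 2) ^ (-β) := by
    have h2k1 : (2:ℝ) ^ (k + 1) = 2 ^ k * 2 := by ring
    have hwle : w / 2 ≤ 2 ^ k := by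
      rw [div_le_iff₀ (by norm_num : (0:ℝ) < 2)]
      rw [h2k1] at hlt2k
      linarith
    exact Real.rpow_le_rpow_of_nonpos (by positivity) hwle (by linarith)
  have hdiv : (w / 2 : ℝ) ^ (-β) = 2 ^ β * w ^ (-β) := by
    rw [Real.div_rpow hw0.le (by norm_num), Real.rpow_neg (by norm_num : (0:ℝ) ≤ 2)]
    field_simp
  calc Fb ν (t * w) ≤ Fb ν (t * 2 ^ k) := hmono
    _ ≤ ((2:ℝ) ^ (-β)) ^ k * Fb ν t := hdbl k
    _ = ((2:ℝ) ^ k) ^ (-β) * Fb ν t := by rw [hpow_eq]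
    _ ≤ (w / 2) ^ (-β) * Fb ν t := mul_le_mul_of_nonneg_right hpow_le (Fb_nonneg ν t)
    _ = 2 ^ β * w ^ (-β) * Fb ν t := by rw [hdiv]

include hγ hFbpos hFbRV in
lemma karamata :
    Tendsto (fun t => (∫ x in Ioi t, Fb ν x) / (t * Fb ν t)) atTop (𝓝 (γ / (1 - γ))) := by
  obtain ⟨hγ0, hγ1⟩ := hγ
  have hγinv : 1 < γ⁻¹ := (one_lt_inv₀ hγ0).mpr hγ1
  set β := (1 + γ⁻¹) / 2 with hβ
  have hβ1 : 1 < β := by rw [hβ]; linarith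
  have hβγ : β < γ⁻¹ := by rw [hβ]; linarith
  obtain ⟨t₀, ht₀1, hpotter⟩ := Fb_potter ν γ ⟨hγ0, hγ1⟩ hFbpos hFbRV hβ1 hβγ
  have hFbmeas : Measurable (Fb ν) := (Fb_anti ν).measurable
  -- DCT
  have hDCT : Tendsto (fun t => ∫ w in Ioi (1:ℝ), Fb ν (t * w) / Fb ν t) atTop
      (𝓝 (∫ w in Ioi (1:ℝ), w ^ (-γ⁻¹))) := by
    apply tendsto_integral_filter_of_dominated_convergence
      (fun w => 2 ^ β * w ^ (-β))
    · -- measurability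
      refine eventually_atTop.mpr ⟨1, fun t ht => ?_⟩
      apply Measurable.aestronglyMeasurable
      exact (hFbmeas.comp (measurable_const_mul t)).div_const _
    · -- bound
      refine eventually_atTop.mpr ⟨t₀, fun t ht => ?_⟩
      refine (ae_restrict_iff' measurableSet_Ioi).mpr (ae_of_all _ (fun w hw => ?_))
      have hw1 : (1:ℝ) ≤ w := le_of_lt hw
      have hFbt := hFbpos t
      have hbnd := hpotter t ht w hw1
      rw [Real.norm_eq_abs, abs_of_nonneg (div_nonneg (Fb_nonneg ν _) (Fb_nonneg ν t))]
      rw [div_le_iff₀ hFbt]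
      linarith
    · -- integrable bound
      exact (integrableOn_Ioi_rpow_of_lt (by linarith) one_pos).const_mul _
    · -- pointwise limit
      refine (ae_restrict_iff' measurableSet_Ioi).mpr (ae_of_all _ (fun w hw => ?_))
      exact hFbRV w (lt_trans one_pos hw)
  -- value of limit integral
  have hval : ∫ w in Ioi (1:ℝ), w ^ (-γ⁻¹) = γ / (1 - γ) := by
    rw [integral_Ioi_rpow_of_lt (by linarith) one_pos, Real.one_rpow]
    have h2 : -γ⁻¹ + 1 ≠ 0 := by intro hcon; linarith
    have h3 : (1:ℝ) - γ ≠ 0 := by intro h; rw [sub_eq_zero] at h; linarith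
    rw [div_eq_div_iff h2 h3]
    field_simp
    ring
  rw [← hval]
  refine Tendsto.congr' ?_ hDCT
  filter_upwards [eventually_ge_atTop (1:ℝ)] with t ht
  have ht0 : (0:ℝ) < t := by linarith
  have key : ∫ w in Ioi (1:ℝ), Fb ν (t * w) = t⁻¹ * ∫ x in Ioi t, Fb ν x := by
    have := integral_comp_mul_left_Ioi (Fb ν) 1 ht0
    rw [mul_one] at this
    rw [this, smul_eq_mul]
  calc ∫ w in Ioi (1:ℝ), Fb ν (t * w) / Fb ν t
      = (∫ w in Ioi (1:ℝ), Fb ν (t * w)) / Fb ν t := integral_div _ _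
    _ = (t⁻¹ * ∫ x in Ioi t, Fb ν x) / Fb ν t := by rw [key]
    _ = (∫ x in Ioi t, Fb ν x) / (t * Fb ν t) := by
        have h1 : Fb ν t ≠ 0 := (hFbpos t).ne'
        have h2 : t ≠ 0 := ht0.ne'
        field_simp
end Karamata

section Pi
variable {Ω : Type*} [MeasurableSpace Ω] (μ : Measure Ω) [IsProbabilityMeasure μ]
  (X : Ω → ℝ) (hXmeas : Measurable X) (hX : Integrable X μ)
include hXmeas hX

lemma map_Ioi (x : ℝ) : (μ.map X) (Ioi x) = μ {ω | x < X ω} := by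
  rw [Measure.map_apply hXmeas measurableSet_Ioi]; rfl

lemma map_Iic (x : ℝ) : (μ.map X) (Iic x) = μ {ω | X ω ≤ x} := by
  rw [Measure.map_apply hXmeas measurableSet_Iic]; rfl

lemma pi_integrable (t : ℝ) : Integrable (fun ω => max (X ω - t) 0) μ :=
  (hX.sub (integrable_const t)).pos_part

lemma pi_eq (t : ℝ) :
    ∫ ω, max (X ω - t) 0 ∂μ = ∫ x in Ioi t, Fb (μ.map X) x := by
  have hint := pi_integrable μ X hXmeas hX t
  rw [hint.integral_eq_integral_meas_lt (ae_of_all _ (fun ω => le_max_right _ _))]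
  have hcong : EqOn (fun s => (μ {a | s < max (X a - t) 0}).toReal)
      (fun s => Fb (μ.map X) (s + t)) (Ioi (0:ℝ)) := by
    intro s hs
    have hset : {a | s < max (X a - t) 0} = {ω | s + t < X ω} := by
      ext a
      simp only [mem_setOf_eq, lt_max_iff]
      constructor
      · rintro (h | h)
        · linarith
        · exact absurd h (not_lt.mpr (le_of_lt (mem_Ioi.mp hs)))
      · intro h; left; linarith
    simp only
    rw [hset, Fb, map_Ioi μ X hXmeas hX]
  rw [setIntegral_congr_fun (f := fun s => μ.real {a | s < max (X a - t) 0}) measurableSet_Ioi hcong]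
  have hmp : MeasurePreserving (fun x : ℝ => x + t) volume volume :=
    measurePreserving_add_right volume t
  have hemb : MeasurableEmbedding (fun x : ℝ => x + t) := measurableEmbedding_addRight t
  have h := hmp.setIntegral_preimage_emb hemb (Fb (μ.map X)) (Ioi t)
  have hpre : (fun x : ℝ => x + t) ⁻¹' Ioi t = Ioi 0 := by
    ext x; simp [mem_Ioi]
  rw [hpre] at h
  exact h

lemma pi_anti : Antitone (fun t => ∫ ω, max (X ω - t) 0 ∂μ) := by
  intro a b hab
  apply integral_mono (pi_integrable μ X hXmeas hX b) (pi_integrable μ X hXmeas hX a)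
  intro ω
  exact max_le_max (by simp; linarith) le_rfl

lemma pi_pos (hFbpos : ∀ x, 0 < Fb (μ.map X) x) (t : ℝ) :
    0 < ∫ ω, max (X ω - t) 0 ∂μ := by
  set s : Set Ω := {ω | t + 1 < X ω} with hs
  have hsm : MeasurableSet s := measurableSet_lt measurable_const hXmeas
  have hind : Integrable (s.indicator (fun _ => (1:ℝ))) μ := by
    rw [integrable_indicator_iff hsm]
    exact integrableOn_const (measure_lt_top μ s).ne
  have hle : s.indicator (fun _ => (1:ℝ)) ≤ fun ω => max (X ω - t) 0 := by
    intro ω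
    by_cases hω : ω ∈ s
    · rw [indicator_of_mem hω]
      have h1 : t + 1 < X ω := hω
      simp only [le_max_iff]
      left; linarith
    · rw [indicator_of_notMem hω]
      exact le_max_right _ _
  have h1 : (μ s).toReal ≤ ∫ ω, max (X ω - t) 0 ∂μ := by
    have h2 := integral_mono hind (pi_integrable μ X hXmeas hX t) hle
    rwa [integral_indicator_const (1:ℝ) hsm, smul_eq_mul, mul_one] at h2
  have h2 : 0 < (μ s).toReal := by
    have h3 := hFbpos (t+1)
    rw [Fb, map_Ioi μ X hXmeas hX] at h3
    exact h3
  linarith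
end Pi

end BelliniAux
/-- Bellini et al. 2014, Theorem 11: if `X` is heavy-tailed with tail
quantile function `U` satisfying `U(sz)/U(s) → z^γ` for all `z > 0` with `0 < γ < 1`,
`U(s) → ∞`, and `E|min(X,0)| < ∞`, then `F̄(ξ_τ)/(1−τ) → γ⁻¹ − 1` as `τ ↑ 1`. -/
theorem heavyTail_survival_expectile_limit {Ω : Type*} [MeasurableSpace Ω] (μ : Measure Ω)
    [IsProbabilityMeasure μ] (X : Ω → ℝ) (hXmeas : Measurable X)
    (hmin : Integrable (fun ω => min (X ω) 0) μ) (hX : Integrable X μ)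
    (γ : ℝ) (hγ : γ ∈ Set.Ioo (0 : ℝ) 1)
    (Fbar : ℝ → ℝ) (hFbar : ∀ x : ℝ, Fbar x = (μ {ω | x < X ω}).toReal)
    (q : ℝ → ℝ) (hq : ∀ τ : ℝ, q τ = sInf {x : ℝ | τ ≤ (μ {ω | X ω ≤ x}).toReal})
    (U : ℝ → ℝ) (hU : ∀ s : ℝ, U s = q (1 - 1/s))
    (hRV : ∀ z : ℝ, 0 < z → Tendsto (fun s => U (s * z) / U s) atTop (nhds (z ^ γ)))
    (hUtop : Tendsto U atTop atTop)
    (ξ : ℝ → ℝ)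
    (hξ : ∀ τ ∈ Set.Ioo (0 : ℝ) 1, ξ τ - ∫ ω, X ω ∂μ
        = ((2 * τ - 1) / (1 - τ)) * ∫ ω, (if ξ τ < X ω then X ω - ξ τ else 0) ∂μ) :
    Tendsto (fun τ => Fbar (ξ τ) / (1 - τ)) (nhdsWithin (1 : ℝ) (Set.Iio 1))
      (nhds (γ⁻¹ - 1)) := by
  classical
  open BelliniAux in
  obtain ⟨hγ0, hγ1⟩ := hγ
  have hXae : AEMeasurable X μ := hXmeas.aemeasurable
  set ν := μ.map X with hν
  haveI : IsProbabilityMeasure ν := Measure.isProbabilityMeasure_map hXae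
  have hqQ : ∀ τ, q τ = Q ν τ := by
    intro τ
    rw [hq, Q]
    congr 1
    ext x
    simp only [Set.mem_setOf_eq]
    rw [cdf_apply ν x, hν, map_Iic μ X hXmeas hX]
  have hUQ : ∀ s : ℝ, U s = Q ν (1 - 1/s) := fun s => by rw [hU, hqQ]
  have hFbar_eq : ∀ x, Fbar x = Fb ν x := fun x => by
    rw [hFbar, Fb, hν, map_Ioi μ X hXmeas hX]
  have hFbpos : ∀ x, 0 < Fb ν x := Fb_pos ν U hUQ hUtop
  have hFbRV : ∀ z : ℝ, 0 < z →
      Tendsto (fun t => Fb ν (t * z) / Fb ν t) atTop (𝓝 (z ^ (-γ⁻¹))) :=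
    Fb_RV ν U hUQ hUtop γ ⟨hγ0, hγ1⟩ hRV
  have hKar := karamata ν γ ⟨hγ0, hγ1⟩ hFbpos hFbRV
  set π : ℝ → ℝ := fun t => ∫ ω, max (X ω - t) 0 ∂μ with hπdef
  have hπanti : Antitone π := pi_anti μ X hXmeas hX
  have hπpos : ∀ t, 0 < π t := fun t => pi_pos μ X hXmeas hX (hν ▸ hFbpos) t
  have hπeq : ∀ t, π t = ∫ x in Set.Ioi t, Fb ν x := fun t => by
    rw [hπdef]; exact hν ▸ pi_eq μ X hXmeas hX t
  have hint_eq : ∀ t : ℝ, (∫ ω, (if t < X ω then X ω - t else 0) ∂μ) = π t := by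
    intro t
    have hfun : (fun ω => if t < X ω then X ω - t else 0)
        = fun ω => max (X ω - t) 0 := by
      funext ω
      by_cases h : t < X ω
      · rw [if_pos h, max_eq_left (by linarith)]
      · push_neg at h
        rw [if_neg (not_lt.mpr h), max_eq_right (by linarith)]
    rw [hfun]
  set m := ∫ ω, X ω ∂μ with hm
  have heq : ∀ τ ∈ Set.Ioo (0:ℝ) 1, ξ τ - m = ((2*τ-1)/(1-τ)) * π (ξ τ) := by
    intro τ hτ
    rw [← hint_eq (ξ τ)]
    exact hξ τ hτ
  set l := nhdsWithin (1:ℝ) (Set.Iio 1) with hl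
  have hid : Tendsto (fun τ : ℝ => τ) l (𝓝 1) := tendsto_id.mono_left nhdsWithin_le_nhds
  have hev_lt1 : ∀ᶠ τ in l, τ < 1 := eventually_mem_nhdsWithin
  have hev_gt : ∀ᶠ τ in l, (1/2:ℝ) < τ := hid.eventually (eventually_gt_nhds (by norm_num))
  have hev01 : ∀ᶠ τ in l, τ ∈ Set.Ioo (0:ℝ) 1 := by
    filter_upwards [hev_lt1, hev_gt] with τ h1 h2
    exact ⟨by linarith, h1⟩
  have h2τ : Tendsto (fun τ : ℝ => 2*τ-1) l (𝓝 1) := by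
    have h := (hid.const_mul 2).sub_const 1
    norm_num at h
    exact h
  have hrtop : Tendsto (fun τ => (2*τ-1)/(1-τ)) l atTop := by
    have h1 : Tendsto (fun τ : ℝ => 1 - τ) l (𝓝[>] 0) := by
      apply tendsto_nhdsWithin_of_tendsto_nhds_of_eventually_within
      · have h : Tendsto (fun τ : ℝ => 1 - τ) l (𝓝 (1-1)) :=
          (tendsto_const_nhds (x := (1:ℝ))).sub hid
        norm_num at h
        exact h
      · filter_upwards [hev_lt1] with τ h
        simp only [Set.mem_Ioi]
        linarith
    have h2 : Tendsto (fun τ : ℝ => (1 - τ)⁻¹) l atTop := h1.inv_tendsto_nhdsGT_zero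
    have h4 := Filter.Tendsto.pos_mul_atTop one_pos h2τ h2
    refine h4.congr (fun τ => ?_)
    rw [div_eq_mul_inv]
  have hξtop : Tendsto ξ l atTop := by
    rw [tendsto_atTop]
    intro M
    set K := max M 0 with hK
    have hc : 0 < π K := hπpos K
    filter_upwards [hev01, hrtop.eventually_ge_atTop ((K - m)/(π K) + 1),
      hrtop.eventually_ge_atTop 0] with τ hτ hr1 hr0
    by_contra hcon
    push_neg at hcon
    have hKξ : ξ τ ≤ K := le_trans hcon.le (le_max_left _ _)
    have hπK : π K ≤ π (ξ τ) := hπanti hKξ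
    have he := heq τ hτ
    have hstep : ξ τ - m ≥ ((K-m)/(π K) + 1) * π K := by
      calc ξ τ - m = ((2*τ-1)/(1-τ)) * π (ξ τ) := he
        _ ≥ ((2*τ-1)/(1-τ)) * π K := mul_le_mul_of_nonneg_left hπK hr0
        _ ≥ ((K-m)/(π K) + 1) * π K := mul_le_mul_of_nonneg_right hr1 hc.le
    have hKb : ((K-m)/(π K) + 1) * π K = K - m + π K := by field_simp
    rw [hKb] at hstep
    have : K < ξ τ := by linarith
    have : M ≤ K := le_max_left _ _
    linarith
  have hA : Tendsto (fun τ => π (ξ τ) / (ξ τ * Fb ν (ξ τ))) l (𝓝 (γ/(1-γ))) := by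
    have h := hKar.comp hξtop
    refine h.congr (fun τ => ?_)
    simp only [Function.comp_apply]
    rw [hπeq (ξ τ)]
  have hmξ : Tendsto (fun τ => m / ξ τ) l (𝓝 0) := tendsto_const_nhds.div_atTop hξtop
  have hC : Tendsto (fun τ => (1 - m/ξ τ)/(2*τ-1)) l (𝓝 1) := by
    have h : Tendsto (fun τ => (1 - m/ξ τ)/(2*τ-1)) l (𝓝 ((1 - 0)/1)) :=
      ((tendsto_const_nhds (x := (1:ℝ))).sub hmξ).div h2τ one_ne_zero
    norm_num at h
    exact h
  have hB : Tendsto (fun τ => π (ξ τ) / ((1-τ) * ξ τ)) l (𝓝 1) := by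
    refine Tendsto.congr' ?_ hC
    filter_upwards [hev01, hev_gt, hξtop.eventually_gt_atTop 0] with τ hτ h12 hξpos
    have hτ1 : (1:ℝ) - τ ≠ 0 := by have := hτ.2; intro h; rw [sub_eq_zero] at h; linarith
    have h2τ0 : 2*τ - 1 ≠ 0 := by intro h; linarith [h12]
    have he := heq τ hτ
    have hπval : π (ξ τ) = (ξ τ - m) * (1-τ) / (2*τ-1) := by
      rw [he]
      field_simp
    rw [hπval]
    field_simp
  have hABne : γ/(1-γ) ≠ 0 := div_ne_zero hγ0.ne' (by intro h; rw [sub_eq_zero] at h; linarith)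
  have hfin := hB.div hA hABne
  have hgoal : Tendsto (fun τ => Fb ν (ξ τ)/(1-τ)) l (𝓝 (1/(γ/(1-γ)))) := by
    refine Tendsto.congr' ?_ hfin
    filter_upwards [hev01, hξtop.eventually_gt_atTop 0] with τ hτ hξpos
    have hτ1 : (1:ℝ) - τ ≠ 0 := by have := hτ.2; intro h; rw [sub_eq_zero] at h; linarith
    have hπ0 : π (ξ τ) ≠ 0 := (hπpos _).ne'
    have hξ0 : ξ τ ≠ 0 := hξpos.ne'
    have hF0 : Fb ν (ξ τ) ≠ 0 := (hFbpos _).ne'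
    rw [Pi.div_apply]
    field_simp
  have h1γ : (1:ℝ)/(γ/(1-γ)) = γ⁻¹ - 1 := by
    rw [one_div_div]
    rw [div_eq_iff hγ0.ne']
    field_simp
  rw [← h1γ]
  refine hgoal.congr (fun τ => ?_)
  rw [hFbar_eq]
end
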